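/- For every positive integer n, sg(K_{n,m}) ≥ k implies: there is no pair of nonnegative integers (s₁,s₂) with s₁ ≤ n, s₂ ≤ m, s₁ + s₂ < k, C(s₂,2) ≥ n − s₁, and C(s₁,2) ≥ m − s₂. Conversely, sg(K_{n,m}) equals the minimum of s₁ + s₂ over all such feasible pairs (s₁,s₂), provided n, m ≥ 1 and (n,m) ∉ {(1,1),(2,2)}. -/

import Mathlib

/-- A selection of fixed geodesics between pairs of vertices of `S`:
each element of `P` is a walk whose endpoints lie in `S`, which is a shortest path,
with at most one walk per ordered pair of endpoints, and with the walks chosen for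
the two orderings of a pair being reverses of each other. -/
def IsGeodesicSelection {V : Type*} (G : SimpleGraph V) (S : Set V)
    (P : Set ((u : V) × (v : V) × G.Walk u v)) : Prop :=
  (∀ q ∈ P, q.1 ∈ S ∧ q.2.1 ∈ S ∧ q.2.2.IsPath ∧ q.2.2.length = G.dist q.1 q.2.1) ∧
  (∀ q ∈ P, ∀ q' ∈ P,
    (q.1 = q'.1 ∧ q.2.1 = q'.2.1 → q = q') ∧
    (q.1 = q'.2.1 ∧ q.2.1 = q'.1 → q.2.2.support = q'.2.2.support.reverse))

/-- `S` is a strong geodetic set of `G` if one can fix one shortest path between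
each pair of vertices of `S` so that all vertices of `G` are covered. -/
def IsStrongGeodeticSet {V : Type*} (G : SimpleGraph V) (S : Set V) : Prop :=
  ∃ P, IsGeodesicSelection G S P ∧ ∀ w : V, ∃ q ∈ P, w ∈ q.2.2.support

/-- The strong geodetic number: minimum size of a strong geodetic set. -/
noncomputable def strongGeodeticNumber {V : Type*} (G : SimpleGraph V) : ℕ :=
  sInf {k | ∃ S : Set V, S.ncard = k ∧ IsStrongGeodeticSet G S}

/-!
When every geodesic has length at most two, as in a complete bipartite graph, a vertex `w`
outside `S` can only be covered as the middle vertex of a selected geodesic `u - w - v` with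
`u, v ∈ S`, and since at most one geodesic is selected per pair of ends, distinct such vertices
get distinct unordered pairs `s(u, v)`. Conversely, any injective assignment of such pairs to
the vertices outside `S` yields a geodesic selection covering everything. In `K_{α,β}` the
possible pairs for a vertex of one side are the pairs of distinct vertices of `S` on the other
side, so `S` is strong geodetic iff `|α| - s₁ ≤ C(s₂, 2)` and `|β| - s₂ ≤ C(s₁, 2)`, where `s₁`
and `s₂` count the vertices of `S` on either side; minimizing `s₁ + s₂` gives the theorem.
-/

open Function Set Sum

lemma Set.ncard_range_diff {ι V : Type*} [Finite ι] {f : ι → V} (hf : Injective f) (S : Set V) :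
    (range f \ S).ncard = Nat.card ι - (f ⁻¹' S).ncard := by
  rw [← image_compl_preimage, ncard_image_of_injective _ hf, ncard_compl]

lemma Set.ncard_range_inter {ι V : Type*} {f : ι → V} (hf : Injective f) (S : Set V) :
    (range f ∩ S).ncard = (f ⁻¹' S).ncard := by
  rw [← image_preimage_eq_range_inter, ncard_image_of_injective _ hf]

lemma Set.ncard_preimage_inl_add_ncard_preimage_inr {α β : Type*} [Finite α] [Finite β]
    (S : Set (α ⊕ β)) : (inl ⁻¹' S).ncard + (inr ⁻¹' S).ncard = S.ncard := by
  conv_rhs => rw [← image_preimage_inl_union_image_preimage_inr S]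
  rw [ncard_union_eq disjoint_image_inl_image_inr, ncard_image_of_injective _ inl_injective,
    ncard_image_of_injective _ inr_injective]

namespace SimpleGraph

variable {V : Type*} {G : SimpleGraph V}

lemma dist_eq_two_of_adj_of_adj {u v w : V} (huw : G.Adj u w) (hwv : G.Adj w v) (hne : u ≠ v)
    (hnadj : ¬ G.Adj u v) : G.dist u v = 2 := by
  let p : G.Walk u v := .cons huw (.cons hwv .nil)
  have hle : G.dist u v ≤ 2 := G.dist_le p
  have hlt : 1 < G.dist u v := p.reachable.one_lt_dist_of_ne_of_not_adj hne hnadj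
  omega

lemma Walk.support_eq_of_length_le_two {u v w : V} (p : G.Walk u v) (hp : p.length ≤ 2)
    (hw : w ∈ p.support) (hwu : w ≠ u) (hwv : w ≠ v) :
    p.support = [u, w, v] ∧ G.Adj u w ∧ G.Adj w v ∧ p.length = 2 := by
  match p, hp with
  | .nil, _ => simp_all
  | .cons _ .nil, _ => simp_all
  | .cons h (.cons h' .nil), _ =>
    obtain rfl : w = _ := by simpa [hwu, hwv] using hw
    exact ⟨rfl, h, h', rfl⟩
  | .cons _ (.cons _ (.cons _ _)), hp => simp at hp

def IsGeodesicMidpoint (G : SimpleGraph V) (S : Set V) (w : V) (z : Sym2 V) : Prop :=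
  ∃ u v, z = s(u, v) ∧ u ∈ S ∧ v ∈ S ∧ G.Adj u w ∧ G.Adj w v ∧ G.dist u v = 2

end SimpleGraph

open SimpleGraph

section Selection

variable {V : Type*} {G : SimpleGraph V} {S : Set V} {P : Set ((u : V) × (v : V) × G.Walk u v)}

lemma isGeodesicSelection_of_injOn
    (hP : ∀ q ∈ P, q.1 ∈ S ∧ q.2.1 ∈ S ∧ q.2.2.length = G.dist q.1 q.2.1)
    (hinj : InjOn (fun q ↦ s(q.1, q.2.1)) P) : IsGeodesicSelection G S P := by
  refine ⟨fun q hq ↦ ?_, fun q hq q' hq' ↦ ⟨fun h ↦ hinj hq hq' (by simp [h.1, h.2]), fun h ↦ ?_⟩⟩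
  · obtain ⟨hu, hv, hlen⟩ := hP q hq
    exact ⟨hu, hv, q.2.2.isPath_of_length_eq_dist hlen, hlen⟩
  · obtain rfl := hinj hq hq' (by simp [h.1, h.2, Sym2.eq_swap])
    obtain ⟨u, v, p⟩ := q
    obtain rfl : u = v := h.1
    have hlen : p.length = 0 := by simpa using (hP _ hq).2.2
    simp [(Walk.length_eq_zero_iff.mp hlen).eq_nil]

lemma IsGeodesicSelection.support_eq_or_eq_reverse (hP : IsGeodesicSelection G S P)
    {q q' : (u : V) × (v : V) × G.Walk u v} (hq : q ∈ P) (hq' : q' ∈ P)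
    (h : s(q.1, q.2.1) = s(q'.1, q'.2.1)) :
    q.2.2.support = q'.2.2.support ∨ q.2.2.support = q'.2.2.support.reverse := by
  rcases Sym2.eq_iff.mp h with h | h
  · exact .inl (by rw [(hP.2 q hq q' hq').1 h])
  · exact .inr ((hP.2 q hq q' hq').2 h)

end Selection

section Midpoints

variable {V : Type*} {G : SimpleGraph V} {S : Set V}

theorem isStrongGeodeticSet_of_injective_midpoints (e : ↥Sᶜ → Sym2 V) (he : Injective e)
    (hmid : ∀ w : ↥Sᶜ, IsGeodesicMidpoint G S w (e w)) : IsStrongGeodeticSet G S := by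
  choose u v hz huS hvS hu hv hd using hmid
  let path (w : ↥Sᶜ) : G.Walk (u w) (v w) := .cons (hu w) (.cons (hv w) .nil)
  let P : Set ((u : V) × (v : V) × G.Walk u v) :=
    {q | ∃ x ∈ S, q = ⟨x, x, .nil⟩} ∪ range fun w ↦ ⟨u w, v w, path w⟩
  refine ⟨P, isGeodesicSelection_of_injOn ?_ ?_, fun x ↦ ?_⟩
  · rintro q (⟨x, hx, rfl⟩ | ⟨w, rfl⟩)
    · simp [hx]
    · exact ⟨huS w, hvS w, (hd w).symm⟩
  · rintro q (⟨x, hx, rfl⟩ | ⟨w, rfl⟩) q' (⟨x', hx', rfl⟩ | ⟨w', rfl⟩) h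
    · obtain rfl : x = x' := by simpa using h
      rfl
    · have : u w' = v w' := by grind [Sym2.eq_iff]
      simpa [this] using hd w'
    · have : u w = v w := by grind [Sym2.eq_iff]
      simpa [this] using hd w
    · obtain rfl := he ((hz w).trans (h.trans (hz w').symm))
      rfl
  · by_cases hx : x ∈ S
    · exact ⟨⟨x, x, .nil⟩, .inl ⟨x, hx, rfl⟩, by simp⟩
    · exact ⟨_, .inr ⟨⟨x, hx⟩, rfl⟩, by simp [path]⟩

lemma IsGeodesicSelection.support_eq_of_notMem {P : Set ((u : V) × (v : V) × G.Walk u v)}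
    (hP : IsGeodesicSelection G S P) (hG : ∀ u v, G.Reachable u v → G.dist u v ≤ 2)
    {q : (u : V) × (v : V) × G.Walk u v} (hq : q ∈ P) {w : V} (hw : w ∉ S)
    (hwq : w ∈ q.2.2.support) :
    q.2.2.support = [q.1, w, q.2.1] ∧ IsGeodesicMidpoint G S w s(q.1, q.2.1) := by
  obtain ⟨u, v, p⟩ := q
  obtain ⟨hu, hv, -, hlen⟩ := hP.1 _ hq
  obtain ⟨hsupp, huw, hwv, hp2⟩ := p.support_eq_of_length_le_two (hlen ▸ hG u v p.reachable) hwq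
    (ne_of_mem_of_not_mem hu hw).symm (ne_of_mem_of_not_mem hv hw).symm
  exact ⟨hsupp, u, v, rfl, hu, hv, huw, hwv, hlen.symm.trans hp2⟩

theorem IsStrongGeodeticSet.exists_injective_midpoints
    (hG : ∀ u v, G.Reachable u v → G.dist u v ≤ 2) (hS : IsStrongGeodeticSet G S) :
    ∃ e : ↥Sᶜ → Sym2 V, Injective e ∧ ∀ w : ↥Sᶜ, IsGeodesicMidpoint G S w (e w) := by
  obtain ⟨P, hP, hcover⟩ := hS
  choose q hqP hwq using fun w : ↥Sᶜ ↦ hcover w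
  have key (w : ↥Sᶜ) := hP.support_eq_of_notMem hG (hqP w) w.2 (hwq w)
  refine ⟨fun w ↦ s((q w).1, (q w).2.1), fun w w' h ↦ Subtype.ext ?_, fun w ↦ (key w).2⟩
  rcases hP.support_eq_or_eq_reverse (hqP w) (hqP w') h with h | h <;>
    simp only [(key w).1, (key w').1, List.reverse_cons, List.reverse_nil, List.nil_append,
      List.cons_append, List.cons.injEq] at h <;>
    exact h.2.1

end Midpoints

section Counting

variable {V : Type*} [Finite V] {G : SimpleGraph V} {S : Set V}

lemma ncard_diff_le_choose_of_injective_midpoints (e : ↥Sᶜ → Sym2 V) (he : Injective e)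
    (hmid : ∀ w : ↥Sᶜ, IsGeodesicMidpoint G S w (e w)) {X Y : Set V}
    (hXY : ∀ x ∈ X, ∀ y, G.Adj y x → y ∈ Y) :
    (X \ S).ncard ≤ (Y ∩ S).ncard.choose 2 := by
  classical
  have hT : (Y ∩ S).Finite := toFinite _
  let pairs := hT.toFinset.offDiag.image Sym2.mk.uncurry
  have hmem (w : ↥(X \ S)) : e ⟨w, w.2.2⟩ ∈ pairs := by
    obtain ⟨u, v, hz, hu, hv, huw, hwv, hd⟩ := hmid ⟨w, w.2.2⟩
    refine Finset.mem_image.mpr ⟨(u, v), ?_, hz.symm⟩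
    simp only [Finset.mem_offDiag, hT.mem_toFinset]
    exact ⟨⟨hXY _ w.2.1 _ huw, hu⟩, ⟨hXY _ w.2.1 _ hwv.symm, hv⟩, by rintro rfl; simp at hd⟩
  calc (X \ S).ncard = Nat.card ↥(X \ S) := (Nat.card_coe_set_eq _).symm
    _ ≤ Nat.card pairs := Nat.card_le_card_of_injective (fun w ↦ ⟨e ⟨w, w.2.2⟩, hmem w⟩)
        fun w w' h ↦ Subtype.ext (by simpa using he (Subtype.ext_iff.mp h))
    _ = (Y ∩ S).ncard.choose 2 := by
        rw [Nat.card_eq_finsetCard, Sym2.card_image_offDiag, ← ncard_eq_toFinset_card]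

lemma exists_injective_midpoints_of_ncard_diff_le {X Y : Set V}
    (hXY : ∀ x ∈ X, ∀ y ∈ Y, G.Adj y x) (hY : ∀ y ∈ Y, ∀ y' ∈ Y, ¬ G.Adj y y')
    (h : (X \ S).ncard ≤ (Y ∩ S).ncard.choose 2) :
    ∃ e : ↥(X \ S) → Sym2 V, Injective e ∧ ∀ w : ↥(X \ S), IsGeodesicMidpoint G S w (e w) := by
  classical
  have hT : (Y ∩ S).Finite := toFinite _
  have : Fintype ↥(X \ S) := Fintype.ofFinite _
  obtain ⟨f, hf⟩ := Function.Embedding.exists_of_card_le_finset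
    (α := ↥(X \ S)) (s := hT.toFinset.offDiag.image Sym2.mk.uncurry) <| by
      rwa [Sym2.card_image_offDiag, ← ncard_eq_toFinset_card, ← Nat.card_eq_fintype_card,
        Nat.card_coe_set_eq]
  refine ⟨f, f.injective, fun w ↦ ?_⟩
  obtain ⟨⟨u, v⟩, huv, hz⟩ := Finset.mem_image.mp (hf ⟨w, rfl⟩)
  simp only [Finset.mem_offDiag, hT.mem_toFinset] at huv
  obtain ⟨⟨huY, huS⟩, ⟨hvY, hvS⟩, hne⟩ := huv
  exact ⟨u, v, hz.symm, huS, hvS, hXY _ w.2.1 _ huY, (hXY _ w.2.1 _ hvY).symm,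
    dist_eq_two_of_adj_of_adj (hXY _ w.2.1 _ huY) (hXY _ w.2.1 _ hvY).symm hne (hY u huY v hvY)⟩

end Counting

section StrongGeodeticNumber

variable {V : Type*} {G : SimpleGraph V}

lemma strongGeodeticNumber_le {S : Set V} (hS : IsStrongGeodeticSet G S) :
    strongGeodeticNumber G ≤ S.ncard :=
  Nat.sInf_le ⟨S, rfl, hS⟩

lemma exists_isStrongGeodeticSet_ncard_eq_strongGeodeticNumber {S : Set V}
    (hS : IsStrongGeodeticSet G S) :
    ∃ T : Set V, T.ncard = strongGeodeticNumber G ∧ IsStrongGeodeticSet G T :=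
  Nat.sInf_mem (s := {k | ∃ T : Set V, T.ncard = k ∧ IsStrongGeodeticSet G T}) ⟨_, S, rfl, hS⟩

end StrongGeodeticNumber

section CompleteBipartite

variable {α β : Type*}

local notation "K" => completeBipartiteGraph α β

lemma completeBipartiteGraph_dist_le_two {u v : α ⊕ β} (h : (K).Reachable u v) :
    (K).dist u v ≤ 2 := by
  obtain ⟨p⟩ := h
  cases p with
  | nil => simp
  | @cons _ x _ hux _ =>
    by_cases huv : (K).Adj u v
    · simp [dist_eq_one_iff_adj.mpr huv]
    · have hxv : (K).Adj x v := by cases u <;> cases v <;> cases x <;> simp_all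
      exact dist_le (.cons hux (.cons hxv .nil))

lemma IsGeodesicMidpoint.completeBipartiteGraph_isLeft_eq {S : Set (α ⊕ β)} {w w' : α ⊕ β}
    {z : Sym2 (α ⊕ β)} (h : IsGeodesicMidpoint K S w z) (h' : IsGeodesicMidpoint K S w' z) :
    w.isLeft = w'.isLeft := by
  obtain ⟨u, v, rfl, -, -, huw, -⟩ := h
  obtain ⟨u', v', hz, -, -, hu'w', hw'v', -⟩ := h'
  rcases Sym2.eq_iff.mp hz with ⟨rfl, -⟩ | ⟨rfl, -⟩ <;>
    cases u <;> cases w <;> cases w' <;> simp_all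

theorem isStrongGeodeticSet_completeBipartiteGraph_iff [Finite α] [Finite β] {S : Set (α ⊕ β)} :
    IsStrongGeodeticSet K S ↔
      Nat.card α - (inl ⁻¹' S).ncard ≤ (inr ⁻¹' S).ncard.choose 2 ∧
        Nat.card β - (inr ⁻¹' S).ncard ≤ (inl ⁻¹' S).ncard.choose 2 := by
  rw [← ncard_range_diff inl_injective, ← ncard_range_diff inr_injective,
    ← ncard_range_inter inl_injective, ← ncard_range_inter inr_injective]
  constructor
  · intro hS
    obtain ⟨e, he, hmid⟩ :=
      hS.exists_injective_midpoints fun _ _ ↦ completeBipartiteGraph_dist_le_two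
    exact ⟨ncard_diff_le_choose_of_injective_midpoints e he hmid (X := range inl) (by simp),
      ncard_diff_le_choose_of_injective_midpoints e he hmid (X := range inr) (by simp)⟩
  · rintro ⟨h₁, h₂⟩
    classical
    obtain ⟨e₁, he₁, hmid₁⟩ := exists_injective_midpoints_of_ncard_diff_le (G := K)
      (X := range inl) (Y := range inr) (by simp) (by simp) h₁
    obtain ⟨e₂, he₂, hmid₂⟩ := exists_injective_midpoints_of_ncard_diff_le (G := K)
      (X := range inr) (Y := range inl) (by simp) (by simp) h₂
    let e (w : ↥Sᶜ) : Sym2 (α ⊕ β) :=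
      if hw : (w : α ⊕ β) ∈ range inl then e₁ ⟨w, hw, w.2⟩
      else e₂ ⟨w, by rwa [← compl_range_inl], w.2⟩
    have hmid (w : ↥Sᶜ) : IsGeodesicMidpoint K S w (e w) := by
      unfold e; split_ifs
      exacts [hmid₁ _, hmid₂ _]
    refine isStrongGeodeticSet_of_injective_midpoints e (fun w w' h ↦ ?_) hmid
    -- two vertices sharing a midpoint pair lie on the same side, so `e₁` and `e₂` do not collide
    have hside := IsGeodesicMidpoint.completeBipartiteGraph_isLeft_eq (hmid w) (h ▸ hmid w')
    unfold e at h
    split_ifs at h with hw hw' hw'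
    · simpa [Subtype.ext_iff] using he₁ h
    · simp only [range_inl, mem_ofPred_eq] at hw hw'
      simp [hw, hw'] at hside
    · simp only [range_inl, mem_ofPred_eq] at hw hw'
      simp [hw, hw'] at hside
    · simpa [Subtype.ext_iff] using he₂ h

lemma exists_isStrongGeodeticSet_completeBipartiteGraph_ncard_eq [Finite α] [Finite β] {s₁ s₂ : ℕ}
    (h₁ : s₁ ≤ Nat.card α) (h₂ : s₂ ≤ Nat.card β)
    (hc₁ : Nat.card α - s₁ ≤ s₂.choose 2) (hc₂ : Nat.card β - s₂ ≤ s₁.choose 2) :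
    ∃ S : Set (α ⊕ β), S.ncard = s₁ + s₂ ∧ IsStrongGeodeticSet K S := by
  obtain ⟨A, -, hA⟩ := exists_subset_card_eq (s := (univ : Set α)) (n := s₁) (by rwa [ncard_univ])
  obtain ⟨B, -, hB⟩ := exists_subset_card_eq (s := (univ : Set β)) (n := s₂) (by rwa [ncard_univ])
  have hl : inl ⁻¹' (inl '' A ∪ inr '' B) = A := by
    simp [preimage_union, preimage_image_eq _ inl_injective]
  have hr : inr ⁻¹' (inl '' A ∪ inr '' B) = B := by
    simp [preimage_union, preimage_image_eq _ inr_injective]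
  refine ⟨inl '' A ∪ inr '' B, ?_, isStrongGeodeticSet_completeBipartiteGraph_iff.mpr ?_⟩
  · rw [← ncard_preimage_inl_add_ncard_preimage_inr, hl, hr, hA, hB]
  · rw [hl, hr, hA, hB]
    exact ⟨hc₁, hc₂⟩

theorem strongGeodeticNumber_completeBipartiteGraph_le [Finite α] [Finite β] {s₁ s₂ : ℕ}
    (h₁ : s₁ ≤ Nat.card α) (h₂ : s₂ ≤ Nat.card β)
    (hc₁ : Nat.card α - s₁ ≤ s₂.choose 2) (hc₂ : Nat.card β - s₂ ≤ s₁.choose 2) :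
    strongGeodeticNumber K ≤ s₁ + s₂ := by
  obtain ⟨S, hS, hSG⟩ := exists_isStrongGeodeticSet_completeBipartiteGraph_ncard_eq h₁ h₂ hc₁ hc₂
  exact hS ▸ strongGeodeticNumber_le hSG

theorem exists_strongGeodeticNumber_completeBipartiteGraph_eq [Finite α] [Finite β] :
    ∃ s₁ s₂ : ℕ, s₁ ≤ Nat.card α ∧ s₂ ≤ Nat.card β ∧ Nat.card α - s₁ ≤ s₂.choose 2 ∧
      Nat.card β - s₂ ≤ s₁.choose 2 ∧ strongGeodeticNumber K = s₁ + s₂ := by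
  obtain ⟨S₀, -, hS₀⟩ := exists_isStrongGeodeticSet_completeBipartiteGraph_ncard_eq
    (α := α) (β := β) le_rfl le_rfl (by simp) (by simp)
  obtain ⟨S, hS, hSG⟩ := exists_isStrongGeodeticSet_ncard_eq_strongGeodeticNumber hS₀
  obtain ⟨hc₁, hc₂⟩ := isStrongGeodeticSet_completeBipartiteGraph_iff.mp hSG
  exact ⟨_, _, ncard_le_card _, ncard_le_card _, hc₁, hc₂,
    hS ▸ (ncard_preimage_inl_add_ncard_preimage_inr S).symm⟩

end CompleteBipartite

theorem sg_optimization_general (n m : ℕ) :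
    (∀ k : ℕ, k ≤ strongGeodeticNumber (completeBipartiteGraph (Fin n) (Fin m)) →
      ¬ ∃ s₁ s₂ : ℕ, s₁ ≤ n ∧ s₂ ≤ m ∧ s₁ + s₂ < k ∧
          n - s₁ ≤ s₂.choose 2 ∧ m - s₂ ≤ s₁.choose 2) ∧
    (¬ (n = 1 ∧ m = 1) → ¬ (n = 2 ∧ m = 2) →
      strongGeodeticNumber (completeBipartiteGraph (Fin n) (Fin m)) =
        sInf {t : ℕ | ∃ s₁ s₂ : ℕ, s₁ ≤ n ∧ s₂ ≤ m ∧
          n - s₁ ≤ s₂.choose 2 ∧ m - s₂ ≤ s₁.choose 2 ∧ t = s₁ + s₂}) := by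
  have hle {s₁ s₂ : ℕ} (h₁ : s₁ ≤ n) (h₂ : s₂ ≤ m) (hc₁ : n - s₁ ≤ s₂.choose 2)
      (hc₂ : m - s₂ ≤ s₁.choose 2) :
      strongGeodeticNumber (completeBipartiteGraph (Fin n) (Fin m)) ≤ s₁ + s₂ :=
    strongGeodeticNumber_completeBipartiteGraph_le (by simpa using h₁) (by simpa using h₂)
      (by simpa using hc₁) (by simpa using hc₂)
  obtain ⟨s₁, s₂, h₁, h₂, hc₁, hc₂, hsg⟩ :=
    exists_strongGeodeticNumber_completeBipartiteGraph_eq (α := Fin n) (β := Fin m)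
  simp only [Nat.card_eq_fintype_card, Fintype.card_fin] at h₁ h₂ hc₁ hc₂
  refine ⟨fun k hk ⟨t₁, t₂, ht₁, ht₂, hlt, htc₁, htc₂⟩ ↦ ?_, fun _ _ ↦ le_antisymm ?_ ?_⟩
  · exact absurd (hle ht₁ ht₂ htc₁ htc₂) (by omega)
  · exact le_csInf ⟨n + m, n, m, le_rfl, le_rfl, by simp, by simp, rfl⟩
      fun t ⟨t₁, t₂, ht₁, ht₂, htc₁, htc₂, ht⟩ ↦ ht ▸ hle ht₁ ht₂ htc₁ htc₂
  · exact hsg ▸ Nat.sInf_le ⟨s₁, s₂, h₁, h₂, hc₁, hc₂, rfl⟩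

theorem sg_optimization (n m : ℕ) (hn : 0 < n) (hm : 0 < m) :
    (∀ k : ℕ, k ≤ strongGeodeticNumber (completeBipartiteGraph (Fin n) (Fin m)) →
      ¬ ∃ s₁ s₂ : ℕ, s₁ ≤ n ∧ s₂ ≤ m ∧ s₁ + s₂ < k ∧
          n - s₁ ≤ s₂.choose 2 ∧ m - s₂ ≤ s₁.choose 2) ∧
    (¬ (n = 1 ∧ m = 1) → ¬ (n = 2 ∧ m = 2) →
      strongGeodeticNumber (completeBipartiteGraph (Fin n) (Fin m)) =
        sInf {t : ℕ | ∃ s₁ s₂ : ℕ, s₁ ≤ n ∧ s₂ ≤ m ∧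
          n - s₁ ≤ s₂.choose 2 ∧ m - s₂ ≤ s₁.choose 2 ∧ t = s₁ + s₂}) :=
  sg_optimization_general n m
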